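/- Let k be a positive integer and A a vertex set in a multigraph G. Then there is an edge set X of size at most (|A|−1)(k−1) that k-perfectly separates A: for every two vertices a, a′ ∈ A, if a and a′ are not joined by k edge-disjoint paths in G−X, then a and a′ lie in different components of G−X. -/
import Mathlib


/-- A multigraph: an edge type `E` together with an assignment of an
unordered pair of (not necessarily distinct) endvertices to every edge.
Loops and parallel edges are allowed. -/
structure Multigraph (V E : Type) where
  ends : E → Sym2 V

namespace Multigraph

variable {V E : Type}

/-- Walks in a multigraph, recording the edges traversed. -/
inductive Walk (G : Multigraph V E) : V → V → Type
  | nil (v : V) : Walk G v v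
  | cons {u v w : V} (e : E) (h : G.ends e = s(u, v)) (p : Walk G v w) : Walk G u w

namespace Walk

variable {G : Multigraph V E}

/-- The list of vertices visited by a walk. -/
def support : {u v : V} → G.Walk u v → List V
  | u, _, .nil _ => [u]
  | u, _, .cons _ _ p => u :: support p

/-- The list of edges traversed by a walk. -/
def edges : {u v : V} → G.Walk u v → List E
  | _, _, .nil _ => []
  | _, _, .cons e _ p => e :: edges p

/-- The length (number of edges) of a walk. -/
def length : {u v : V} → G.Walk u v → ℕ
  | _, _, .nil _ => 0
  | _, _, .cons _ _ p => length p + 1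

/-- A walk is a path if it repeats no vertex. -/
def IsPath {u v : V} (p : G.Walk u v) : Prop := p.support.Nodup

/-- A closed walk is a cycle if it is nonempty, repeats no edge and repeats no
vertex except the base vertex.  Cycles of length `1` (loops) and of
length `2` (pairs of parallel edges) are allowed. -/
def IsCycle {u : V} (p : G.Walk u u) : Prop :=
  p.edges ≠ [] ∧ p.edges.Nodup ∧ p.support.tail.Nodup

end Walk

open scoped Classical in
/-- The degree of a vertex in a multigraph: loops count twice. -/
noncomputable def degree (G : Multigraph V E) [Fintype E] (v : V) : ℕ :=
  ∑ e : E, (if G.ends e = s(v, v) then 2 else if v ∈ G.ends e then 1 else 0)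

end Multigraph

namespace Multigraph

variable {V E : Type}

/-- There exist `k` pairwise edge-disjoint `u`–`v`-paths in `G`. -/
def EdgeDisjointPaths (G : Multigraph V E) (k : ℕ) (u v : V) : Prop :=
  ∃ P : Fin k → G.Walk u v,
    (∀ i, (P i).IsPath) ∧
    ∀ i j, i ≠ j → ∀ e ∈ (P i).edges, e ∉ (P j).edges

/-- The relation `u ∼ₖ v`: either `u = v` or there are `k` pairwise
edge-disjoint `u`–`v`-paths in `G`. -/
def SimK (G : Multigraph V E) (k : ℕ) (u v : V) : Prop :=
  u = v ∨ G.EdgeDisjointPaths k u v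

end Multigraph

namespace Multigraph

variable {V E : Type}

/-- There exist `k` pairwise edge-disjoint `u`–`v`-paths in `G − X`,
i.e. `k` edge-disjoint paths all of whose edges avoid the edge set `X`. -/
def EdgeDisjointPathsAvoiding (G : Multigraph V E) (k : ℕ) (X : Set E)
    (u v : V) : Prop :=
  ∃ P : Fin k → G.Walk u v,
    (∀ i, (P i).IsPath ∧ ∀ e ∈ (P i).edges, e ∉ X) ∧
    ∀ i j, i ≠ j → ∀ e ∈ (P i).edges, e ∉ (P j).edges

end Multigraph

namespace Multigraph

variable {V E : Type} {G : Multigraph V E}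

namespace Walk

def append : {u v w : V} → G.Walk u v → G.Walk v w → G.Walk u w
  | _, _, _, .nil _, q => q
  | _, _, _, .cons e h p, q => .cons e h (p.append q)

@[simp] lemma edges_append {u v w : V} (p : G.Walk u v) (q : G.Walk v w) :
    (p.append q).edges = p.edges ++ q.edges := by
  induction p with
  | nil => simp [append, edges]
  | cons e h p ih => simp [append, edges, ih]

def reverse : {u v : V} → G.Walk u v → G.Walk v u
  | _, _, .nil v => .nil v
  | _, _, .cons e h p => p.reverse.append (.cons e (h.trans (Sym2.eq_swap)) (.nil _))

lemma mem_edges_reverse {u v : V} (p : G.Walk u v) {e : E} :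
    e ∈ p.reverse.edges ↔ e ∈ p.edges := by
  induction p with
  | nil => simp [reverse]
  | cons e h p ih => simp [reverse, edges, ih, or_comm]

@[simp] lemma start_mem_support {u v : V} (p : G.Walk u v) : u ∈ p.support := by
  cases p <;> simp [support]

/-- drop the beginning of a walk until a given vertex of its support. -/
lemma exists_dropUntil {w v : V} (p : G.Walk w v) :
    ∀ u ∈ p.support, ∃ q : G.Walk u v, q.support.IsSuffix p.support ∧
      ∀ e ∈ q.edges, e ∈ p.edges := by
  induction p with
  | nil w =>
    intro u hu
    simp [support] at hu
    subst hu
    exact ⟨.nil _, by simp [support], by simp [edges]⟩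
  | @cons w x v e h p ih =>
    intro u hu
    simp only [support, List.mem_cons] at hu
    rcases hu with rfl | hu
    · exact ⟨.cons e h p, List.suffix_refl _, fun _ he => he⟩
    · obtain ⟨q, hq1, hq2⟩ := ih u hu
      exact ⟨q, hq1.trans (List.suffix_cons _ _), fun e' he' => by
        simp [edges]; exact Or.inr (hq2 e' he')⟩

/-- From any walk extract a path with a subset of its edges. -/
lemma exists_bypass {u v : V} (p : G.Walk u v) :
    ∃ q : G.Walk u v, q.IsPath ∧ ∀ e ∈ q.edges, e ∈ p.edges := by
  induction p with
  | nil w => exact ⟨.nil w, by simp [IsPath, support], by simp [edges]⟩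
  | @cons w x v e h p ih =>
    obtain ⟨q, hq, hqe⟩ := ih
    by_cases hw : w ∈ q.support
    · obtain ⟨r, hr1, hr2⟩ := exists_dropUntil q w hw
      exact ⟨r, hr1.sublist.nodup hq, fun e' he' => by
        simp [edges]; exact Or.inr (hqe e' (hr2 e' he'))⟩
    · refine ⟨.cons e h q, ?_, ?_⟩
      · simpa [IsPath, support, hw] using hq
      · intro e' he'
        simp [edges] at he' ⊢
        rcases he' with rfl | he'
        · exact Or.inl rfl
        · exact Or.inr (hqe e' he')

end Walk

/-- Connectivity avoiding an edge set. -/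
def Conn (G : Multigraph V E) (X : Set E) (u v : V) : Prop :=
  ∃ p : G.Walk u v, ∀ e ∈ p.edges, e ∉ X

lemma Conn.refl (X : Set E) (u : V) : G.Conn X u u := ⟨.nil u, by simp [Walk.edges]⟩

lemma Conn.symm {X : Set E} {u v : V} (h : G.Conn X u v) : G.Conn X v u := by
  obtain ⟨p, hp⟩ := h
  exact ⟨p.reverse, fun e he => hp e (p.mem_edges_reverse.1 he)⟩

lemma Conn.trans {X : Set E} {u v w : V} (h1 : G.Conn X u v) (h2 : G.Conn X v w) :
    G.Conn X u w := by
  obtain ⟨p, hp⟩ := h1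
  obtain ⟨q, hq⟩ := h2
  refine ⟨p.append q, fun e he => ?_⟩
  rw [Walk.edges_append, List.mem_append] at he
  exact he.elim (hp e) (hq e)

lemma Conn.mono {X Y : Set E} (hXY : X ⊆ Y) {u v : V} (h : G.Conn Y u v) :
    G.Conn X u v := by
  obtain ⟨p, hp⟩ := h
  exact ⟨p, fun e he hX => hp e he (hXY hX)⟩

end Multigraph
namespace Multigraph

variable {V E : Type} {G : Multigraph V E}

open scoped Classical

/-- Contribution of a directed edge to the excess at a vertex. -/
noncomputable def dg : Option (V × V) → V → ℤ
  | none, _ => 0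
  | some (u, w), v => (if v = u then 1 else 0) - (if v = w then 1 else 0)

section Flows

variable [Fintype E]

/-- The excess (outflow minus inflow) of an orientation at a vertex. -/
noncomputable def excess (f : E → Option (V × V)) (v : V) : ℤ := ∑ e : E, dg (f e) v

/-- An orientation of some of the edges of `G`. -/
def IsOrient (G : Multigraph V E) (f : E → Option (V × V)) : Prop :=
  ∀ e p q, f e = some (p, q) → G.ends e = s(p, q)

lemma excess_update (f : E → Option (V × V)) (e : E) (o : Option (V × V)) (x : V) :
    excess (Function.update f e o) x = excess f x - dg (f e) x + dg o x := by
  classical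
  have h : ∀ e' : E, dg (Function.update f e o e') x
      = dg (f e') x + (if e' = e then dg o x - dg (f e) x else 0) := by
    intro e'
    by_cases he : e' = e
    · subst he; simp [Function.update_self]
    · simp [Function.update_of_ne he, he]
  unfold excess
  simp only [h]
  rw [Finset.sum_add_distrib,
    Finset.sum_ite_eq' Finset.univ e (fun _ => dg o x - dg (f e) x)]
  simp only [Finset.mem_univ, if_true]
  ring

lemma excess_zero_flow (v : V) : excess (fun _ : E => (none : Option (V × V))) v = 0 := by
  simp [excess, dg]

end Flows

/-- Residual walks with respect to an orientation `f`, avoiding `X`. -/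
inductive RWalk (G : Multigraph V E) (f : E → Option (V × V)) (X : Set E) :
    V → V → Type
  | nil (v : V) : RWalk G f X v v
  | consF {u v w : V} (e : E) (hf : f e = none) (hX : e ∉ X)
      (h : G.ends e = s(u, v)) (p : RWalk G f X v w) : RWalk G f X u w
  | consB {u v w : V} (e : E) (hf : f e = some (v, u))
      (p : RWalk G f X v w) : RWalk G f X u w

namespace RWalk

variable {f : E → Option (V × V)} {X : Set E}

def edges : {u v : V} → RWalk G f X u v → List E
  | _, _, .nil _ => []
  | _, _, .consF e _ _ _ p => e :: p.edges
  | _, _, .consB e _ p => e :: p.edges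

def append : {u v w : V} → RWalk G f X u v → RWalk G f X v w → RWalk G f X u w
  | _, _, _, .nil _, q => q
  | _, _, _, .consF e hf hX h p, q => .consF e hf hX h (p.append q)
  | _, _, _, .consB e hf p, q => .consB e hf (p.append q)

/-- Drop the beginning of a residual walk through (and including) an occurrence
of the edge `e`. -/
lemma exists_suffix {s w : V} (q : RWalk G f X s w) (e : E) :
    e ∈ q.edges → q.edges.Nodup →
    ∃ (v₂ : V) (suf : RWalk G f X v₂ w),
      (∀ e' ∈ suf.edges, e' ∈ q.edges) ∧ e ∉ suf.edges ∧ suf.edges.Nodup ∧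
      ((f e = none ∧ ∃ u₂, G.ends e = s(u₂, v₂)) ∨ ∃ u₂, f e = some (v₂, u₂)) := by
  induction q with
  | nil => intro h; simp [edges] at h
  | @consF u v w' e' hf hX h p ih =>
    intro hmem hnd
    simp only [edges, List.mem_cons] at hmem
    rw [edges, List.nodup_cons] at hnd
    rcases hmem with rfl | hmem
    · exact ⟨v, p, fun e' he' => by simp [edges, he'], hnd.1, hnd.2,
        Or.inl ⟨hf, u, h⟩⟩
    · obtain ⟨v₂, suf, h1, h2, h3, h4⟩ := ih hmem hnd.2
      exact ⟨v₂, suf, fun e'' he'' => by simp [edges]; exact Or.inr (h1 e'' he''),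
        h2, h3, h4⟩
  | @consB u v w' e' hf p ih =>
    intro hmem hnd
    simp only [edges, List.mem_cons] at hmem
    rw [edges, List.nodup_cons] at hnd
    rcases hmem with rfl | hmem
    · exact ⟨v, p, fun e' he' => by simp [edges, he'], hnd.1, hnd.2,
        Or.inr ⟨u, hf⟩⟩
    · obtain ⟨v₂, suf, h1, h2, h3, h4⟩ := ih hmem hnd.2
      exact ⟨v₂, suf, fun e'' he'' => by simp [edges]; exact Or.inr (h1 e'' he''),
        h2, h3, h4⟩

/-- Every residual walk contains a residual walk with no repeated edges. -/
lemma exists_nodup {u w : V} (q : RWalk G f X u w) :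
    ∃ q' : RWalk G f X u w, q'.edges.Nodup ∧ ∀ e ∈ q'.edges, e ∈ q.edges := by
  induction q with
  | nil v => exact ⟨.nil v, by simp [edges], by simp [edges]⟩
  | @consF u v w' e hf hX h p ih =>
    obtain ⟨q', hnd, hsub⟩ := ih
    by_cases he : e ∈ q'.edges
    · obtain ⟨v₂, suf, h1, h2, h3, h4⟩ := exists_suffix q' e he hnd
      rcases h4 with ⟨_, u₂, h4⟩ | ⟨u₂, h4⟩
      · rw [h] at h4
        rcases Sym2.eq_iff.mp h4 with ⟨rfl, rfl⟩ | ⟨rfl, rfl⟩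
        · exact ⟨.consF e hf hX h suf, by simp [edges, h2, h3],
            fun e' he' => by
              simp only [edges, List.mem_cons] at he' ⊢
              exact he'.imp id (fun hx => hsub e' (h1 e' hx))⟩
        · exact ⟨suf, h3, fun e' he' => by
            simp only [edges, List.mem_cons]
            exact Or.inr (hsub e' (h1 e' he'))⟩
      · rw [hf] at h4; simp at h4
    · refine ⟨.consF e hf hX h q', by simp [edges, he, hnd], fun e' he' => ?_⟩
      simp only [edges, List.mem_cons] at he' ⊢
      exact he'.imp id (hsub e')
  | @consB u v w' e hf p ih =>
    obtain ⟨q', hnd, hsub⟩ := ih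
    by_cases he : e ∈ q'.edges
    · obtain ⟨v₂, suf, h1, h2, h3, h4⟩ := exists_suffix q' e he hnd
      rcases h4 with ⟨h4, _⟩ | ⟨u₂, h4⟩
      · rw [hf] at h4; simp at h4
      · 
        rw [hf, Option.some_inj] at h4
        obtain ⟨rfl, rfl⟩ := Prod.ext_iff.mp h4
        exact ⟨.consB e hf suf, by simp [edges, h2, h3], fun e' he' => by
          simp only [edges, List.mem_cons] at he' ⊢
          exact he'.imp id (fun hx => hsub e' (h1 e' hx))⟩
    · refine ⟨.consB e hf q', by simp [edges, he, hnd], fun e' he' => ?_⟩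
      simp only [edges, List.mem_cons] at he' ⊢
      exact he'.imp id (hsub e')

end RWalk

end Multigraph
namespace Multigraph

variable {V E : Type} {G : Multigraph V E}

open scoped Classical

@[simp] lemma dg_none (x : V) : dg (none : Option (V × V)) x = 0 := rfl

@[simp] lemma dg_some (p q x : V) :
    dg (some (p, q)) x = (if x = p then 1 else 0) - (if x = q then 1 else 0) := rfl

variable [Fintype E]

/-- Augmenting a flow along a residual walk with no repeated edges. -/
lemma augment {f : E → Option (V × V)} {X : Set E}
    (hval : G.IsOrient f) (hX : ∀ e ∈ X, f e = none) :
    ∀ {u v : V} (p : RWalk G f X u v), p.edges.Nodup →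
    ∃ f' : E → Option (V × V),
      G.IsOrient f' ∧ (∀ e ∈ X, f' e = none) ∧
      (∀ e, e ∉ p.edges → f' e = f e) ∧
      ∀ x, excess f' x = excess f x + (if x = u then 1 else 0)
        - (if x = v then 1 else 0) := by
  intro u v p
  induction p with
  | nil z =>
    intro _
    exact ⟨f, hval, hX, fun _ _ => rfl, fun x => by by_cases h : x = z <;> simp [h]⟩
  | @consF u v w e hf hXe h p ih =>
    intro hnd
    rw [RWalk.edges, List.nodup_cons] at hnd
    obtain ⟨f₁, h1, h2, h3, h4⟩ := ih hnd.2
    have hfe : f₁ e = none := (h3 e hnd.1).trans hf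
    refine ⟨Function.update f₁ e (some (u, v)), ?_, ?_, ?_, ?_⟩
    · intro e' p' q' he'
      by_cases hee : e' = e
      · subst hee
        rw [Function.update_self, Option.some_inj] at he'
        obtain ⟨rfl, rfl⟩ := Prod.ext_iff.mp he'
        exact h
      · exact h1 e' p' q' (by rwa [Function.update_of_ne hee] at he')
    · intro e' he'
      have hee : e' ≠ e := fun hc => hXe (hc ▸ he')
      rw [Function.update_of_ne hee]
      exact h2 e' he'
    · intro e' he'
      simp only [RWalk.edges, List.mem_cons, not_or] at he'
      rw [Function.update_of_ne he'.1]
      exact h3 e' he'.2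
    · intro x
      rw [excess_update, hfe, h4 x]
      simp only [dg_none, dg_some]
      by_cases hxu : x = u <;> by_cases hxv : x = v <;> by_cases hxw : x = w <;>
        simp [hxu, hxv, hxw] <;> ring
  | @consB u v w e hf p ih =>
    intro hnd
    rw [RWalk.edges, List.nodup_cons] at hnd
    obtain ⟨f₁, h1, h2, h3, h4⟩ := ih hnd.2
    have hfe : f₁ e = f e := h3 e hnd.1
    refine ⟨Function.update f₁ e none, ?_, ?_, ?_, ?_⟩
    · intro e' p' q' he'
      by_cases hee : e' = e
      · subst hee; rw [Function.update_self] at he'; exact absurd he' (by simp)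
      · exact h1 e' p' q' (by rwa [Function.update_of_ne hee] at he')
    · intro e' he'
      by_cases hee : e' = e
      · subst hee; rw [Function.update_self]
      · rw [Function.update_of_ne hee]; exact h2 e' he'
    · intro e' he'
      simp only [RWalk.edges, List.mem_cons, not_or] at he'
      rw [Function.update_of_ne he'.1]
      exact h3 e' he'.2
    · intro x
      rw [excess_update, hfe, hf, h4 x]
      simp only [dg_none, dg_some]
      by_cases hxu : x = u <;> by_cases hxv : x = v <;> by_cases hxw : x = w <;>
        simp [hxu, hxv, hxw] <;> ring

/-- The set of edges used by an orientation. -/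
noncomputable def fsupp (f : E → Option (V × V)) : Finset E :=
  Finset.univ.filter (fun e => f e ≠ none)

/-- Extract a trail from a vertex of positive excess to one of negative excess. -/
lemma extract_trail :
    ∀ (n : ℕ) (f : E → Option (V × V)), (fsupp f).card = n → G.IsOrient f →
    ∀ (v : V), 0 < excess f v →
    ∃ (v' : V) (w : G.Walk v v') (f' : E → Option (V × V)),
      excess f v' < 0 ∧ G.IsOrient f' ∧
      (∀ e ∈ w.edges, f e ≠ none) ∧
      (∀ e, (e ∈ w.edges → f' e = none) ∧ (e ∉ w.edges → f' e = f e)) ∧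
      ∀ x, excess f' x = excess f x - (if x = v then 1 else 0)
        + (if x = v' then 1 else 0) := by
  intro n
  induction n using Nat.strong_induction_on with
  | _ n ih =>
    intro f hcard hval v hv
    -- find an edge leaving v
    have hex : ∃ e q, f e = some (v, q) ∧ q ≠ v := by
      by_contra hc
      push_neg at hc
      have : excess f v ≤ 0 := by
        refine Finset.sum_nonpos ?_
        intro e _
        match he : f e with
        | none => simp
        | some (p, q) =>
          simp only [dg_some]
          by_cases hvp : v = p
          · subst hvp
            have hq := hc e q he
            simp [hq]
          · simp [hvp]
            split <;> omega
      omega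
    obtain ⟨e, q, he, hqv⟩ := hex
    set f₁ := Function.update f e none with hf₁
    have hf₁e : f₁ e = none := Function.update_self _ _ _
    have hf₁' : ∀ e', e' ≠ e → f₁ e' = f e' := fun e' h => Function.update_of_ne h _ _
    have hexc : ∀ x, excess f₁ x = excess f x - (if x = v then 1 else 0)
        + (if x = q then 1 else 0) := by
      intro x
      rw [hf₁, excess_update, he]
      simp only [dg_some, dg_none]
      ring
    have hval₁ : G.IsOrient f₁ := by
      intro e' p' q' he'
      by_cases hee : e' = e
      · subst hee; rw [hf₁e] at he'; exact absurd he' (by simp)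
      · exact hval e' p' q' (by rwa [hf₁' e' hee] at he')
    have hcard₁ : (fsupp f₁).card < n := by
      have hsub : fsupp f₁ ⊂ fsupp f := by
        constructor
        · intro e' he'
          simp only [fsupp, Finset.mem_filter, Finset.mem_univ, true_and] at he' ⊢
          by_cases hee : e' = e
          · subst hee; exact absurd hf₁e he'
          · rwa [hf₁' e' hee] at he'
        · intro hsub'
          have : e ∈ fsupp f := by
            simp only [fsupp, Finset.mem_filter, Finset.mem_univ, true_and, he]
            simp
          have := hsub' this
          simp only [fsupp, Finset.mem_filter, hf₁e] at this
          exact this.2 rfl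
      calc (fsupp f₁).card < (fsupp f).card := Finset.card_lt_card hsub
        _ = n := hcard
    have hends : G.ends e = s(v, q) := hval e v q he
    by_cases hq : 0 < excess f₁ q
    · obtain ⟨v', w', f₂, hneg, hval₂, hused, hchange, hexc₂⟩ :=
        ih _ hcard₁ f₁ rfl hval₁ q hq
      have hew' : e ∉ w'.edges := fun hc => (hused e hc) hf₁e
      refine ⟨v', .cons e hends w', f₂, ?_, hval₂, ?_, ?_, ?_⟩
      · -- excess f v' < 0
        have hv'q : v' ≠ q := by
          rintro rfl
          omega
        have hv'v : v' ≠ v := by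
          rintro rfl
          have := hexc v'
          rw [if_pos rfl, if_neg hv'q] at this
          omega
        have := hexc v'
        rw [if_neg hv'v, if_neg hv'q] at this
        omega
      · intro e' he'
        simp only [Walk.edges, List.mem_cons] at he'
        rcases he' with rfl | he'
        · rw [he]; simp
        · intro hc
          exact hused e' he' (by rwa [hf₁' e' (fun h => (hused e' he') (h ▸ hf₁e))])
      · intro e'
        constructor
        · intro he'
          simp only [Walk.edges, List.mem_cons] at he'
          rcases he' with rfl | he'
          · rw [(hchange e').2 hew', hf₁e]
          · exact (hchange e').1 he'
        · intro he'
          simp only [Walk.edges, List.mem_cons, not_or] at he'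
          rw [(hchange e').2 he'.2, hf₁' e' he'.1]
      · intro x
        rw [hexc₂ x, hexc x]
        ring
    · -- stop: q has negative excess in f
      have hq' : excess f q < 0 := by
        have := hexc q
        rw [if_neg hqv, if_pos rfl] at this
        omega
      refine ⟨q, .cons e hends (.nil q), f₁, hq', hval₁, ?_, ?_, hexc⟩
      · intro e' he'
        simp only [Walk.edges, List.mem_cons, List.not_mem_nil, or_false] at he'
        subst he'
        rw [he]; simp
      · intro e'
        constructor
        · intro he'
          simp only [Walk.edges, List.mem_cons, List.not_mem_nil, or_false] at he'
          subst he'; exact hf₁e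
        · intro he'
          simp only [Walk.edges, List.mem_cons, List.not_mem_nil, or_false] at he'
          exact hf₁' e' he'

end Multigraph
namespace Multigraph

variable {V E : Type} {G : Multigraph V E}

open scoped Classical

variable [Fintype E]

/-- Decompose a flow of value `m` into `m` edge-disjoint trails. -/
lemma decompose {a b : V} (hab : a ≠ b) :
    ∀ (m : ℕ) (f : E → Option (V × V)), G.IsOrient f →
    (∀ x, x ≠ a → x ≠ b → excess f x = 0) →
    excess f a = m →
    ∃ P : Fin m → G.Walk a b,
      (∀ i, ∀ e ∈ (P i).edges, f e ≠ none) ∧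
      ∀ i j, i ≠ j → ∀ e ∈ (P i).edges, e ∉ (P j).edges := by
  intro m
  induction m with
  | zero => intro f _ _ _; exact ⟨fun i => i.elim0, fun i => i.elim0, fun i => i.elim0⟩
  | succ m ihm =>
    intro f hval hcons hexc
    have hpos : 0 < excess f a := by rw [hexc]; exact_mod_cast Nat.succ_pos m
    obtain ⟨v', w, f', hneg, hval', hused, hchange, hexc'⟩ :=
      extract_trail (fsupp f).card f rfl hval a hpos
    have hv' : v' = b := by
      by_contra hc
      have hva : v' ≠ a := by rintro rfl; omega
      have := hcons v' hva hc
      omega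
    subst v'
    have hexc'a : excess f' a = m := by
      have h := hexc' a
      rw [if_pos rfl, if_neg hab] at h
      rw [h, hexc]
      push_cast; ring
    have hcons' : ∀ x, x ≠ a → x ≠ b → excess f' x = 0 := by
      intro x hxa hxb
      have h := hexc' x
      rw [if_neg hxa, if_neg hxb] at h
      rw [h, hcons x hxa hxb]; ring
    obtain ⟨P', hP1, hP2⟩ := ihm f' hval' hcons' hexc'a
    have hdisj : ∀ i, ∀ e ∈ (P' i).edges, e ∉ w.edges := by
      intro i e he hew
      exact hP1 i e he ((hchange e).1 hew)
    have hP1f : ∀ i, ∀ e ∈ (P' i).edges, f e ≠ none := by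
      intro i e he
      have h1 := hP1 i e he
      rw [← (hchange e).2 (hdisj i e he)]
      exact h1
    refine ⟨Fin.cons w P', ?_, ?_⟩
    · intro i
      induction i using Fin.cases with
      | zero => simpa [Fin.cons_zero] using hused
      | succ i => simpa [Fin.cons_succ] using hP1f i
    · intro i j hij
      induction i using Fin.cases with
      | zero =>
        induction j using Fin.cases with
        | zero => exact absurd rfl hij
        | succ j =>
          intro e he
          rw [Fin.cons_succ]
          rw [Fin.cons_zero] at he
          exact fun hc => hdisj j e hc he
      | succ i =>
        induction j using Fin.cases with
        | zero =>
          intro e he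
          rw [Fin.cons_zero]
          rw [Fin.cons_succ] at he
          exact hdisj i e he
        | succ j =>
          intro e he
          rw [Fin.cons_succ] at he ⊢
          exact hP2 i j (fun h => hij (by rw [h])) e he

variable [Fintype V]

/-- Menger's theorem, cut version: either `k` edge-disjoint `a`–`b` paths
avoiding `X`, or a small cut. -/
lemma menger_aux {a b : V} (hab : a ≠ b) (X : Set E) (k : ℕ) :
    ∀ (n : ℕ) (f : E → Option (V × V)), G.IsOrient f →
    (∀ e ∈ X, f e = none) →
    (∀ x, x ≠ a → x ≠ b → excess f x = 0) →
    ∀ m : ℕ, excess f a = m → m + n = k →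
    G.EdgeDisjointPathsAvoiding k X a b ∨
    ∃ F : Finset E, F.card < k ∧ (∀ e ∈ F, e ∉ X) ∧
      ∀ p : G.Walk a b, (∀ e ∈ p.edges, e ∉ X) → ∃ e ∈ p.edges, e ∈ F := by
  intro n
  induction n with
  | zero =>
    intro f hval hX hcons m hexc hmk
    left
    rw [Nat.add_zero] at hmk
    subst hmk
    obtain ⟨P, hP1, hP2⟩ := decompose hab m f hval hcons hexc
    have hbp := fun i => Walk.exists_bypass (P i)
    choose Q hQpath hQsub using hbp
    refine ⟨Q, fun i => ⟨hQpath i, fun e he hX' => hP1 i e (hQsub i e he) (hX e hX')⟩,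
      fun i j hij e hei hej => hP2 i j hij e (hQsub i e hei) (hQsub j e hej)⟩
  | succ n ihn =>
    intro f hval hX hcons m hexc hmk
    by_cases hreach : Nonempty (RWalk G f X a b)
    · obtain ⟨q⟩ := hreach
      obtain ⟨q', hnd, _⟩ := q.exists_nodup
      obtain ⟨f', h1, h2, h3, h4⟩ := augment hval hX q' hnd
      have hexc' : excess f' a = (m + 1 : ℕ) := by
        have h := h4 a
        rw [if_pos rfl, if_neg hab] at h
        rw [h, hexc]
        push_cast; ring
      have hcons' : ∀ x, x ≠ a → x ≠ b → excess f' x = 0 := by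
        intro x hxa hxb
        have h := h4 x
        rw [if_neg hxa, if_neg hxb] at h
        rw [h, hcons x hxa hxb]; ring
      exact ihn f' h1 h2 hcons' (m + 1) hexc' (by omega)
    · right
      set R : V → Prop := fun v => Nonempty (RWalk G f X a v) with hR
      have hRa : R a := ⟨.nil a⟩
      have hRb : ¬ R b := hreach
      have hstepF : ∀ u v e, R u → f e = none → e ∉ X → G.ends e = s(u, v) → R v :=
        fun u v e hu hf hXe h => hu.elim fun p => ⟨p.append (.consF e hf hXe h (.nil v))⟩
      have hstepB : ∀ u v e, R u → f e = some (v, u) → R v :=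
        fun u v e hu hf => hu.elim fun p => ⟨p.append (.consB e hf (.nil v))⟩
      set RF : Finset V := Finset.univ.filter R with hRF
      set D : Finset E := Finset.univ.filter
        (fun e => ∃ p q, f e = some (p, q) ∧ R p ∧ ¬ R q) with hD
      set F : Finset E := Finset.univ.filter
        (fun e => e ∉ X ∧ ∃ u v, G.ends e = s(u, v) ∧ R u ∧ ¬ R v) with hF
      have hsum1 : ∑ v ∈ RF, excess f v = m := by
        rw [Finset.sum_eq_single_of_mem a (by simp [hRF, hRa])]
        · exact hexc
        · intro v hv hva
          rcases eq_or_ne v b with rfl | hvb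
          · rw [hRF, Finset.mem_filter] at hv
            exact absurd hv.2 hRb
          · exact hcons v hva hvb
      have hsum2 : ∑ v ∈ RF, excess f v = ∑ e : E, (if e ∈ D then (1 : ℤ) else 0) := by
        unfold excess
        rw [Finset.sum_comm]
        refine Finset.sum_congr rfl fun e _ => ?_
        match he : f e with
        | none =>
          have : e ∉ D := by simp [hD, he]
          simp [this]
        | some (p, q) =>
          have hsplit : ∑ v ∈ RF, dg (some (p, q)) v
              = (if p ∈ RF then (1:ℤ) else 0) - (if q ∈ RF then 1 else 0) := by
            simp only [dg_some]
            rw [Finset.sum_sub_distrib,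
              Finset.sum_ite_eq' RF p (fun _ => (1:ℤ)),
              Finset.sum_ite_eq' RF q (fun _ => (1:ℤ))]
          rw [hsplit]
          have hmemRF : ∀ x, x ∈ RF ↔ R x := by
            intro x; simp [hRF]
          by_cases hp : R p <;> by_cases hq : R q
          · have hnD : e ∉ D := by
              rw [hD, Finset.mem_filter]
              rintro ⟨-, p', q', hpq, hp', hq'⟩
              rw [he, Option.some_inj] at hpq
              cases hpq
              exact hq' hq
            simp [hnD, hmemRF, hp, hq]
          · have hD' : e ∈ D := by
              rw [hD, Finset.mem_filter]
              exact ⟨Finset.mem_univ e, p, q, he, hp, hq⟩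
            simp [hD', hmemRF, hp, hq]
          · exact absurd (hstepB q p e hq he) hp
          · have hnD : e ∉ D := by
              rw [hD, Finset.mem_filter]
              rintro ⟨-, p', q', hpq, hp', hq'⟩
              rw [he, Option.some_inj] at hpq
              cases hpq
              exact hp hp'
            simp [hnD, hmemRF, hp, hq]
      have hDcard : (D.card : ℤ) = m := by
        rw [← hsum1, hsum2]
        rw [Finset.sum_ite_mem, Finset.univ_inter, Finset.sum_const]
        simp
      have hFD : F ⊆ D := by
        intro e he
        rw [hF, Finset.mem_filter] at he
        obtain ⟨-, hXe, u, v, hends, hRu, hnRv⟩ := he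
        rcases hfe : f e with - | ⟨p, q⟩
        · exact absurd (hstepF u v e hRu hfe hXe hends) hnRv
        · have h2 := (hval e p q hfe).symm.trans hends
          rw [hD, Finset.mem_filter]
          rcases Sym2.eq_iff.mp h2 with ⟨rfl, rfl⟩ | ⟨rfl, rfl⟩
          · exact ⟨Finset.mem_univ e, p, q, hfe, hRu, hnRv⟩
          · exact absurd (hstepB q p e hRu hfe) hnRv
      have hFcard : F.card < k := by
        have h1 : F.card ≤ D.card := Finset.card_le_card hFD
        have h2 : D.card = m := by exact_mod_cast hDcard
        omega
      have hcross : ∀ {u v : V} (p : G.Walk u v),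
          (∀ e ∈ p.edges, e ∉ X) → R u → ¬ R v → ∃ e ∈ p.edges, e ∈ F := by
        intro u v p
        induction p with
        | nil z => intro _ hRu hnRv; exact absurd hRu hnRv
        | @cons u x v e h p ih =>
          intro havoid hRu hnRv
          by_cases hx : R x
          · obtain ⟨e', he', hF'⟩ := ih
              (fun e' he' => havoid e' (by simp [Walk.edges, he'])) hx hnRv
            exact ⟨e', by simp [Walk.edges, he'], hF'⟩
          · refine ⟨e, by simp [Walk.edges], ?_⟩
            rw [hF, Finset.mem_filter]
            exact ⟨Finset.mem_univ e, havoid e (by simp [Walk.edges]), u, x, h, hRu, hx⟩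
      exact ⟨F, hFcard, fun e he => ((Finset.mem_filter.mp he).2).1,
        fun p hp => hcross p hp hRa hRb⟩

/-- Menger's theorem for multigraphs (edge version, avoiding a set `X`). -/
lemma menger {a b : V} (hab : a ≠ b) (X : Set E) (k : ℕ) :
    G.EdgeDisjointPathsAvoiding k X a b ∨
    ∃ F : Finset E, F.card < k ∧ (∀ e ∈ F, e ∉ X) ∧
      ∀ p : G.Walk a b, (∀ e ∈ p.edges, e ∉ X) → ∃ e ∈ p.edges, e ∈ F := by
  refine menger_aux hab X k k (fun _ => none) ?_ ?_ ?_ 0 ?_ ?_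
  · intro e p q h; simp at h
  · intro e _; rfl
  · intro x _ _; exact excess_zero_flow x
  · simpa using excess_zero_flow a
  · omega

end Multigraph
namespace Multigraph

variable {V E : Type} {G : Multigraph V E} [Fintype V] [Fintype E]

open scoped Classical

/-- The connectivity class of `a` within `A`, avoiding `X`. -/
noncomputable def cls (G : Multigraph V E) (A : Finset V) (X : Finset E) (a : V) :
    Finset V :=
  A.filter (fun b => G.Conn (↑X) a b)

/-- `X` `k`-perfectly separates `A`. -/
def Good (G : Multigraph V E) (k : ℕ) (A : Finset V) (X : Finset E) : Prop :=
  ∀ a ∈ A, ∀ a' ∈ A, a ≠ a' → ¬ G.EdgeDisjointPathsAvoiding k (↑X) a a' →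
    ∀ p : G.Walk a a', ∃ e ∈ p.edges, e ∈ X

lemma cls_eq_of_conn {A : Finset V} {X : Finset E} {a a' : V}
    (h : G.Conn (↑X) a a') : G.cls A X a = G.cls A X a' := by
  ext b
  simp only [cls, Finset.mem_filter, and_congr_right_iff]
  exact fun _ => ⟨fun hb => h.symm.trans hb, fun hb => h.trans hb⟩

lemma mem_cls_self {A : Finset V} {X : Finset E} {a : V} (ha : a ∈ A) :
    a ∈ G.cls A X a :=
  Finset.mem_filter.mpr ⟨ha, Conn.refl _ a⟩

lemma greedy (k : ℕ) (A : Finset V) :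
    ∀ (n : ℕ) (X : Finset E), A.card ≤ (A.image (G.cls A X)).card + n →
    ∃ Z : Finset E, X ⊆ Z ∧ Z.card ≤ X.card + n * (k - 1) ∧ G.Good k A Z := by
  intro n
  induction n with
  | zero =>
    intro X hle
    by_cases hg : G.Good k A X
    · exact ⟨X, Finset.Subset.refl X, by omega, hg⟩
    · exfalso
      unfold Good at hg
      push_neg at hg
      obtain ⟨a, ha, a', ha', haa', hEDPA, p, hp⟩ := hg
      have hconn : G.Conn (↑X) a a' := ⟨p, hp⟩
      have hcls : G.cls A X a = G.cls A X a' := cls_eq_of_conn hconn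
      have himg : A.image (G.cls A X) = (A.erase a).image (G.cls A X) := by
        apply Finset.Subset.antisymm
        · intro s hs
          obtain ⟨b, hb, rfl⟩ := Finset.mem_image.mp hs
          by_cases hba : b = a
          · subst hba
            exact Finset.mem_image.mpr ⟨a', Finset.mem_erase.mpr ⟨haa'.symm, ha'⟩,
              hcls.symm⟩
          · exact Finset.mem_image.mpr ⟨b, Finset.mem_erase.mpr ⟨hba, hb⟩, rfl⟩
        · exact Finset.image_subset_image (Finset.erase_subset a A)
      have h1 : (A.image (G.cls A X)).card ≤ A.card - 1 := by
        rw [himg]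
        calc ((A.erase a).image (G.cls A X)).card ≤ (A.erase a).card :=
              Finset.card_image_le
          _ = A.card - 1 := Finset.card_erase_of_mem ha
      have h2 : 1 ≤ A.card := Finset.card_pos.mpr ⟨a, ha⟩
      omega
  | succ n ihn =>
    intro X hle
    by_cases hg : G.Good k A X
    · exact ⟨X, Finset.Subset.refl X, by omega, hg⟩
    · unfold Good at hg
      push_neg at hg
      obtain ⟨a, ha, a', ha', haa', hEDPA, p, hp⟩ := hg
      have hconn : G.Conn (↑X) a a' := ⟨p, hp⟩
      rcases menger (G := G) haa' ((↑X : Set E)) k with hL | ⟨F, hFk, hFX, hsep⟩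
      · exact absurd hL hEDPA
      · set X' : Finset E := X ∪ F with hX'
        have hXX' : (↑X : Set E) ⊆ ↑X' := by
          intro e he; simp only [hX', Finset.coe_union, Set.mem_union]; exact Or.inl he
        have hnotconn : ¬ G.Conn (↑X') a a' := by
          rintro ⟨q, hq⟩
          have hqX : ∀ e ∈ q.edges, e ∉ (↑X : Set E) := fun e he hx => hq e he (hXX' hx)
          obtain ⟨e, he, heF⟩ := hsep q hqX
          exact hq e he (by simp [hX', heF])
        -- the number of classes increases
        set ρ : Finset V → Finset V :=
          fun s => A.filter (fun x => ∃ b ∈ s, G.Conn (↑X) x b) with hρ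
        have hρcls : ∀ b ∈ A, ρ (G.cls A X' b) = G.cls A X b := by
          intro b hb
          ext x
          simp only [hρ, cls, Finset.mem_filter, and_congr_right_iff]
          intro hxA
          constructor
          · rintro ⟨c, ⟨hcA, hbc⟩, hxc⟩
            exact (hbc.mono hXX').trans hxc.symm
          · intro hbx
            exact ⟨b, ⟨hb, Conn.refl _ b⟩, hbx.symm⟩
        have himg2 : A.image (G.cls A X) = (A.image (G.cls A X')).image ρ := by
          apply Finset.Subset.antisymm
          · intro s hs
            obtain ⟨b, hb, rfl⟩ := Finset.mem_image.mp hs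
            exact Finset.mem_image.mpr ⟨G.cls A X' b, Finset.mem_image_of_mem _ hb,
              hρcls b hb⟩
          · intro s hs
            obtain ⟨t, ht, rfl⟩ := Finset.mem_image.mp hs
            obtain ⟨b, hb, rfl⟩ := Finset.mem_image.mp ht
            rw [hρcls b hb]
            exact Finset.mem_image_of_mem _ hb
        have hclsne : G.cls A X' a' ≠ G.cls A X' a := by
          intro hc
          have : a' ∈ G.cls A X' a := hc ▸ mem_cls_self ha'
          exact hnotconn (Finset.mem_filter.mp this).2
        have himg3 : (A.image (G.cls A X')).image ρ
            = ((A.image (G.cls A X')).erase (G.cls A X' a)).image ρ := by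
          apply Finset.Subset.antisymm
          · intro s hs
            obtain ⟨t, ht, rfl⟩ := Finset.mem_image.mp hs
            obtain ⟨b, hb, rfl⟩ := Finset.mem_image.mp ht
            by_cases hba : G.cls A X' b = G.cls A X' a
            · refine Finset.mem_image.mpr ⟨G.cls A X' a', ?_, ?_⟩
              · exact Finset.mem_erase.mpr ⟨hclsne, Finset.mem_image_of_mem _ ha'⟩
              · have hb' : G.cls A X b = G.cls A X a := by
                  rw [← hρcls b hb, ← hρcls a ha, hba]
                rw [hρcls a' ha', hρcls b hb, hb', cls_eq_of_conn hconn]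
            · exact Finset.mem_image.mpr ⟨G.cls A X' b,
                Finset.mem_erase.mpr ⟨hba, Finset.mem_image_of_mem _ hb⟩, rfl⟩
          · exact Finset.image_subset_image (Finset.erase_subset _ _)
        have hmem : G.cls A X' a ∈ A.image (G.cls A X') := Finset.mem_image_of_mem _ ha
        have hcard2 : (A.image (G.cls A X)).card + 1 ≤ (A.image (G.cls A X')).card := by
          have hc1 : (A.image (G.cls A X)).card
              ≤ ((A.image (G.cls A X')).erase (G.cls A X' a)).card := by
            rw [himg2, himg3]
            exact Finset.card_image_le
          have hc2 := Finset.card_erase_of_mem hmem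
          have hc3 : 1 ≤ (A.image (G.cls A X')).card :=
            Finset.card_pos.mpr ⟨_, hmem⟩
          omega
        obtain ⟨Z, hZ1, hZ2, hZ3⟩ := ihn X' (by omega)
        refine ⟨Z, Finset.Subset.trans Finset.subset_union_left hZ1, ?_, hZ3⟩
        have hXc : X'.card ≤ X.card + F.card := Finset.card_union_le X F
        have hmul : (n + 1) * (k - 1) = n * (k - 1) + (k - 1) := by ring
        have hFk' : F.card ≤ k - 1 := by omega
        omega

end Multigraph
/-- for every vertex set `A` of a multigraph `G` there is an
edge set `X` with `|X| ≤ (|A| − 1)(k − 1)` that `k`-perfectly separates `A`: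
any two distinct vertices of `A` that are not joined by `k` edge-disjoint
paths in `G − X` lie in different components of `G − X` (there is no walk
between them avoiding `X`). -/
theorem kPerfect_separation
    {V E : Type} [Fintype V] [Fintype E] (G : Multigraph V E) (k : ℕ)
    (hk : 1 ≤ k) (A : Finset V) :
    ∃ X : Finset E, X.card ≤ (A.card - 1) * (k - 1) ∧
      ∀ a ∈ A, ∀ a' ∈ A, a ≠ a' →
        ¬ G.EdgeDisjointPathsAvoiding k (↑X) a a' →
        ∀ p : G.Walk a a', ∃ e ∈ p.edges, e ∈ X := by
  classical
  have hstart : A.card ≤ (A.image (G.cls A ∅)).card + (A.card - 1) := by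
    rcases A.eq_empty_or_nonempty with rfl | ⟨a, ha⟩
    · simp
    · have hmem : G.cls A ∅ a ∈ A.image (G.cls A ∅) := Finset.mem_image_of_mem _ ha
      have h1 : 1 ≤ (A.image (G.cls A ∅)).card := Finset.card_pos.mpr ⟨_, hmem⟩
      have h2 : 1 ≤ A.card := Finset.card_pos.mpr ⟨a, ha⟩
      omega
  obtain ⟨Z, hsub, hcard, hgood⟩ := G.greedy k A (A.card - 1) ∅ hstart
  exact ⟨Z, by simpa using hcard, hgood⟩
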